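/- arXiv:2004.08437 — 2 statements merged into one kernel-verified Lean document; each statement's English description precedes it below -/
import Mathlib

section
/- Let μ1, μ2 be real numbers and set μ3 = μ1, μ4 = μ2. The Hessian matrix H of V at the point (0, π/2, π, 3π/2) has characteristic polynomial X · (X − 2μ1μ2) · (X − (−3μ1² + 2μ1μ2)/2) · (X − (2μ1μ2 − 3μ2²)/2); equivalently, its eigenvalues are 0, 2μ1μ2, (−3μ1² + 2μ1μ2)/2, and (2μ1μ2 − 3μ2²)/2. -/
open Real Polynomial

/-- The potential `V` for the (1+4)-vortex problem with circulation
parameters `μ` and angular positions `θ`. -/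
noncomputable def V (μ θ : Fin 4 → ℝ) : ℝ :=
  -∑ i : Fin 4, ∑ j ∈ Finset.Ioi i,
      μ i * μ j *
        (Real.cos (θ i - θ j) + (1 / 2) * Real.log (2 - 2 * Real.cos (θ i - θ j)))

/-- The partial derivative `∂V/∂θ_k` at the point `θ`. -/
noncomputable def partialV (μ θ : Fin 4 → ℝ) (k : Fin 4) : ℝ :=
  deriv (fun t => V μ (Function.update θ k t)) (θ k)

/-- `θ` is a critical point of `V`: all four partial derivatives vanish. -/
def IsCriticalPt (μ θ : Fin 4 → ℝ) : Prop :=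
  ∀ k : Fin 4, partialV μ θ k = 0

/-- The Hessian matrix of `V` at `θ`, `H k l = ∂²V/∂θ_k ∂θ_l`. -/
noncomputable def hessV (μ θ : Fin 4 → ℝ) : Matrix (Fin 4) (Fin 4) ℝ :=
  fun k l => deriv (fun t => partialV μ (Function.update θ k t) l) (θ k)

/-! The potential is a sum of pair interactions `μᵢ μⱼ F(θᵢ - θⱼ)` with
`F x = cos x + ½ log (2 - 2 cos x)`. Away from collisions, `∂ₖV = -∑ⱼ μₖ μⱼ F'(θₖ - θⱼ)` because
`F'` is odd, and differentiating once more gives the Hessian in terms of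
`F'' x = -cos x - 1 / (2 - 2 cos x)`, which is `-1/2` at a quarter turn and `3/4` at a half turn.
At the square the Hessian is invariant under the relabelling `i ↦ i + 2`, so it is block diagonal
in the basis `e₀ ± e₂, e₁ ± e₃`, and the characteristic polynomial factors accordingly. -/

open Finset Function Filter Topology

noncomputable def pairPotential (x : ℝ) : ℝ := cos x + 1 / 2 * log (2 - 2 * cos x)
noncomputable def pairPotentialDeriv (x : ℝ) : ℝ := -sin x + sin x / (2 - 2 * cos x)
noncomputable def pairPotentialDeriv2 (x : ℝ) : ℝ := -cos x - 1 / (2 - 2 * cos x)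

lemma two_sub_two_mul_cos_ne_zero {x : ℝ} (h : cos x ≠ 1) : 2 - 2 * cos x ≠ 0 :=
  fun h' => h (by linarith)

lemma hasDerivAt_two_sub_two_mul_cos (x : ℝ) :
    HasDerivAt (fun y => 2 - 2 * cos y) (2 * sin x) x := by
  simpa using ((hasDerivAt_cos x).const_mul 2).const_sub 2

lemma hasDerivAt_pairPotential {x : ℝ} (h : cos x ≠ 1) :
    HasDerivAt pairPotential (pairPotentialDeriv x) x := by
  have hne := two_sub_two_mul_cos_ne_zero h
  refine ((hasDerivAt_cos x).add
    (((hasDerivAt_two_sub_two_mul_cos x).log hne).const_mul (1 / 2))).congr_deriv ?_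
  rw [pairPotentialDeriv]
  field_simp

lemma hasDerivAt_pairPotentialDeriv {x : ℝ} (h : cos x ≠ 1) :
    HasDerivAt pairPotentialDeriv (pairPotentialDeriv2 x) x := by
  have hne := two_sub_two_mul_cos_ne_zero h
  refine ((hasDerivAt_sin x).neg.add
    ((hasDerivAt_sin x).div (hasDerivAt_two_sub_two_mul_cos x) hne)).congr_deriv ?_
  rw [pairPotentialDeriv2]
  field_simp
  nlinarith [sin_sq_add_cos_sq x]

lemma pairPotentialDeriv_neg (x : ℝ) : pairPotentialDeriv (-x) = -pairPotentialDeriv x := by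
  simp only [pairPotentialDeriv, sin_neg, cos_neg]; ring

def IsCollisionFree {ι : Type*} (θ : ι → ℝ) : Prop :=
  Pairwise fun i j => cos (θ i - θ j) ≠ 1

lemma IsCollisionFree.eventually_update {ι : Type*} [Finite ι] [DecidableEq ι] {θ : ι → ℝ}
    (h : IsCollisionFree θ) (k : ι) : ∀ᶠ t in 𝓝 (θ k), IsCollisionFree (update θ k t) := by
  have hc : Continuous (update θ k) := continuous_const.update k continuous_id
  simp only [IsCollisionFree, Pairwise, eventually_all]
  intro i j hij
  exact (continuous_cos.comp (((continuous_apply i).comp hc).sub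
    ((continuous_apply j).comp hc))).continuousAt.eventually_ne (by simpa using h hij)

lemma hasDerivAt_comp_update_sub {ι : Type*} [DecidableEq ι] {f f' : ℝ → ℝ} {θ : ι → ℝ}
    {i j : ι} (k : ι) (hf : i ≠ j → HasDerivAt f (f' (θ i - θ j)) (θ i - θ j)) :
    HasDerivAt (fun t => f (update θ k t i - update θ k t j))
      (f' (θ i - θ j) * ((Pi.single k 1 : ι → ℝ) i - (Pi.single k 1 : ι → ℝ) j)) (θ k) := by
  rcases eq_or_ne i j with rfl | hij
  · simp [hasDerivAt_const]
  have hu := hasDerivAt_pi.1 (hasDerivAt_update θ k (θ k))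
  simpa [Function.comp_def] using (hf hij).comp_of_eq (θ k) ((hu i).fun_sub (hu j)) (by simp)

lemma sum_Ioi_mul_single_sub_single {ι R : Type*} [Fintype ι] [LinearOrder ι]
    [LocallyFiniteOrderTop ι] [Ring R] [IsAddTorsionFree R] (a : ι → ι → R)
    (ha : ∀ i j, a j i = -a i j) (k : ι) :
    ∑ i, ∑ j ∈ Ioi i, a i j * ((Pi.single k 1 : ι → R) i - (Pi.single k 1 : ι → R) j) =
      ∑ j, a k j := by
  calc _ = ∑ j, ((if k < j then a k j else 0) - if j < k then a j k else 0) := by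
        simp only [mul_sub, sum_sub_distrib, ← filter_lt_eq_Ioi, sum_filter, Pi.single_apply]
        conv_lhs => arg 2; rw [sum_comm]
        simp only [mul_ite, mul_one, mul_zero, ← ite_and, and_comm (b := _ = k)]
        simp [ite_and, sum_ite_irrel]
    _ = ∑ j, a k j := sum_congr rfl fun j _ => by
        rcases lt_trichotomy j k with h | rfl | h
        · simp [h, h.not_gt, ha k j]
        · simp [self_eq_neg.1 (ha j j)]
        · simp [h, h.not_gt]

lemma partialV_eq {μ θ : Fin 4 → ℝ} (hθ : IsCollisionFree θ) (k : Fin 4) :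
    partialV μ θ k = -∑ j, μ k * μ j * pairPotentialDeriv (θ k - θ j) := by
  have hV : HasDerivAt (fun t => V μ (update θ k t))
      (-∑ i, ∑ j ∈ Ioi i, μ i * μ j * (pairPotentialDeriv (θ i - θ j) *
        ((Pi.single k 1 : Fin 4 → ℝ) i - (Pi.single k 1 : Fin 4 → ℝ) j))) (θ k) :=
    (HasDerivAt.fun_sum fun i _ => HasDerivAt.fun_sum fun j _ =>
      (hasDerivAt_comp_update_sub k fun hij => hasDerivAt_pairPotential (hθ hij)).const_mul
      (μ i * μ j)).neg
  rw [partialV, hV.deriv, ← sum_Ioi_mul_single_sub_single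
    (fun i j => μ i * μ j * pairPotentialDeriv (θ i - θ j)) (fun i j => ?_) k]
  · simp only [mul_assoc]
  · rw [← neg_sub, pairPotentialDeriv_neg]
    ring

lemma hessV_eq {μ θ : Fin 4 → ℝ} (hθ : IsCollisionFree θ) (k l : Fin 4) :
    hessV μ θ k l = -∑ j, μ l * μ j * (pairPotentialDeriv2 (θ l - θ j) *
      ((Pi.single k 1 : Fin 4 → ℝ) l - (Pi.single k 1 : Fin 4 → ℝ) j)) := by
  have hpartial : (fun t => partialV μ (update θ k t) l) =ᶠ[𝓝 (θ k)]
      fun t => -∑ j, μ l * μ j * pairPotentialDeriv (update θ k t l - update θ k t j) :=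
    (hθ.eventually_update k).mono fun t ht => partialV_eq ht l
  rw [hessV, hpartial.deriv_eq]
  exact (HasDerivAt.fun_sum fun j _ =>
    (hasDerivAt_comp_update_sub k fun hlj => hasDerivAt_pairPotentialDeriv (hθ hlj)).const_mul
      (μ l * μ j)).neg.deriv

lemma cos_three_pi_div_two : cos (3 * π / 2) = 0 := by
  rw [show 3 * π / 2 = π / 2 + π by ring, cos_add_pi, cos_pi_div_two, neg_zero]

lemma sin_three_pi_div_two : sin (3 * π / 2) = -1 := by
  rw [show 3 * π / 2 = π / 2 + π by ring, sin_add_pi, sin_pi_div_two]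

lemma square_isCollisionFree : IsCollisionFree ![0, π / 2, π, 3 * π / 2] := by
  intro i j hij
  fin_cases i <;> fin_cases j <;>
    simp_all [cos_sub, cos_three_pi_div_two, sin_three_pi_div_two] <;> norm_num

lemma hessV_square (μ1 μ2 : ℝ) :
    hessV ![μ1, μ2, μ1, μ2] ![0, π / 2, π, 3 * π / 2] =
      !![μ1 * μ2 - 3 * μ1 ^ 2 / 4, -(μ1 * μ2) / 2, 3 * μ1 ^ 2 / 4, -(μ1 * μ2) / 2;
        -(μ1 * μ2) / 2, μ1 * μ2 - 3 * μ2 ^ 2 / 4, -(μ1 * μ2) / 2, 3 * μ2 ^ 2 / 4;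
        3 * μ1 ^ 2 / 4, -(μ1 * μ2) / 2, μ1 * μ2 - 3 * μ1 ^ 2 / 4, -(μ1 * μ2) / 2;
        -(μ1 * μ2) / 2, 3 * μ2 ^ 2 / 4, -(μ1 * μ2) / 2, μ1 * μ2 - 3 * μ2 ^ 2 / 4] := by
  ext k l
  rw [hessV_eq square_isCollisionFree]
  fin_cases k <;> fin_cases l <;>
    simp [Fin.sum_univ_four, pairPotentialDeriv2, cos_sub, cos_three_pi_div_two,
      sin_three_pi_div_two] <;>
    ring

lemma charpoly_halfTurnInvariant {R : Type*} [CommRing R] (a b c d e : R) :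
    (!![a, b, c, b; b, d, b, e; c, b, a, b; b, e, b, d] : Matrix (Fin 4) (Fin 4) R).charpoly =
      ((X - C (a + c)) * (X - C (d + e)) - 4 * C b ^ 2) * (X - C (a - c)) * (X - C (d - e)) := by
  rw [Matrix.charpoly, Matrix.det_succ_row_zero]
  simp [Fin.sum_univ_succ, Matrix.det_fin_three, Fin.succAbove, Matrix.charmatrix_apply]
  ring

/-- Characteristic polynomial of the Hessian of `V` at the (1+4)-gon with
`mu3 = mu1`, `mu4 = mu2`. -/
theorem square_hessian_charpoly (μ1 μ2 : ℝ) :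
    (hessV ![μ1, μ2, μ1, μ2] ![0, π / 2, π, 3 * π / 2]).charpoly =
      X * (X - C (2 * μ1 * μ2)) * (X - C ((-3 * μ1 ^ 2 + 2 * μ1 * μ2) / 2)) *
        (X - C ((2 * μ1 * μ2 - 3 * μ2 ^ 2) / 2)) := by
  rw [hessV_square, charpoly_halfTurnInvariant]
  refine Polynomial.funext fun r => ?_
  simp only [eval_mul, eval_sub, eval_X, eval_C, eval_pow, eval_ofNat]
  ring
end

section
/- Let μ1, μ2, μ3, μ4 be nonzero real numbers and let θ2 ∈ (0, 2π) with θ2 ≠ π. If (0, θ2, π, θ2 + π) is a critical point of V, then either (μ1 = μ3 and μ2 = μ4) or (μ1 = −μ3 and μ2 = −μ4). (In other words, in a rectangular configuration, the circulations of the two pairs of vortices reflected through the origin must both be equal or both be additive inverses.) -/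
/-!
With the pair energy `f x = cos x + log (2 - 2 cos x) / 2`, the partial derivative `∂V/∂θ_k` is
`-∑_{j ≠ k} μ_k μ_j f' (θ_k - θ_j)`. Since `f'` is odd, `2π`-periodic and vanishes at `π`, at the
rectangle `(0, t, π, t + π)` the four equations become, after cancelling `μ_k` and writing
`a = f' t`, `b = f' (t + π)`,
`μ₁ a + μ₃ b = μ₃ a + μ₁ b = 0` and `μ₂ a + μ₄ b = μ₄ a + μ₂ b = 0`.
Adding and subtracting gives `(μ₁ ± μ₃)(a ± b) = 0 = (μ₂ ± μ₄)(a ± b)`, and `a + b`, `a - b` cannot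
both vanish: `f' x = sin x (2 cos x - 1) / (2 - 2 cos x)`, so `a = b = 0` would force
`cos t = 1/2 = -cos t`.
-/

open Real Polynomial

theorem sin_ne_zero_of_mem_Ioo_of_ne_pi {t : ℝ} (ht : t ∈ Set.Ioo 0 (2 * π)) (htπ : t ≠ π) :
    sin t ≠ 0 := by
  have h := (sin_eq_zero_iff_of_lt_of_lt (x := t - π) (by linarith [ht.1]) (by linarith [ht.2])).not.2
    (sub_ne_zero.2 htπ)
  rwa [sin_sub_pi, neg_eq_zero] at h

theorem pairs_eq_or_eq_neg_of_swap_eqns {μ1 μ2 μ3 μ4 a b : ℝ} (hab : a ≠ 0 ∨ b ≠ 0)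
    (e1 : μ1 * a + μ3 * b = 0) (e2 : μ3 * a + μ1 * b = 0)
    (e3 : μ2 * a + μ4 * b = 0) (e4 : μ4 * a + μ2 * b = 0) :
    (μ1 = μ3 ∧ μ2 = μ4) ∨ (μ1 = -μ3 ∧ μ2 = -μ4) := by
  have h13 : (μ1 - μ3) * (a - b) = 0 := by linear_combination e1 - e2
  have h13' : (μ1 + μ3) * (a + b) = 0 := by linear_combination e1 + e2
  have h24 : (μ2 - μ4) * (a - b) = 0 := by linear_combination e3 - e4
  have h24' : (μ2 + μ4) * (a + b) = 0 := by linear_combination e3 + e4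
  rcases eq_or_ne (a + b) 0 with hsum | hsum
  · have hdiff : a - b ≠ 0 := fun h => by rcases hab with h' | h' <;> apply h' <;> linarith
    left
    constructor <;> linarith [(mul_eq_zero.1 h13).resolve_right hdiff,
      (mul_eq_zero.1 h24).resolve_right hdiff]
  · right
    constructor <;> linarith [(mul_eq_zero.1 h13').resolve_right hsum,
      (mul_eq_zero.1 h24').resolve_right hsum]

noncomputable def pairEnergy (x : ℝ) : ℝ := cos x + 1 / 2 * log (2 - 2 * cos x)

noncomputable def pairEnergyDeriv (x : ℝ) : ℝ := -sin x + sin x / (2 - 2 * cos x)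

theorem hasDerivAt_pairEnergy {x : ℝ} (hx : cos x ≠ 1) :
    HasDerivAt pairEnergy (pairEnergyDeriv x) x := by
  have hpos : 2 - 2 * cos x ≠ 0 := fun h => hx (by linarith)
  have hlog := ((((hasDerivAt_cos x).const_mul 2).const_sub 2).log hpos).const_mul (1 / 2 : ℝ)
  refine ((hasDerivAt_cos x).fun_add hlog).congr_deriv ?_
  rw [pairEnergyDeriv]
  ring

theorem pairEnergyDeriv_neg (x : ℝ) : pairEnergyDeriv (-x) = -pairEnergyDeriv x := by
  simp only [pairEnergyDeriv, sin_neg, cos_neg]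
  ring

theorem pairEnergyDeriv_pi : pairEnergyDeriv π = 0 := by
  simp [pairEnergyDeriv]

theorem pairEnergyDeriv_sub_pi (x : ℝ) : pairEnergyDeriv (x - π) = pairEnergyDeriv (x + π) := by
  simp only [pairEnergyDeriv, sin_sub_pi, cos_sub_pi, sin_add_pi, cos_add_pi]

theorem pairEnergyDeriv_eq_zero_iff {x : ℝ} (hx : sin x ≠ 0) :
    pairEnergyDeriv x = 0 ↔ cos x = 1 / 2 := by
  have hc : 2 - 2 * cos x ≠ 0 := fun h => hx (sin_eq_zero_iff_cos_eq.2 (.inl (by linarith)))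
  have hform : pairEnergyDeriv x = sin x * (2 * cos x - 1) / (2 - 2 * cos x) := by
    rw [pairEnergyDeriv, eq_div_iff hc, add_mul, div_mul_cancel₀ _ hc]
    ring
  rw [hform, div_eq_zero_iff, mul_eq_zero]
  constructor
  · rintro ((h | h) | h) <;> first | exact absurd h hx | exact absurd h hc | linarith
  · intro h; left; right; linarith

theorem pairEnergyDeriv_ne_zero_or_add_pi {x : ℝ} (hx : sin x ≠ 0) :
    pairEnergyDeriv x ≠ 0 ∨ pairEnergyDeriv (x + π) ≠ 0 := by
  have hx' : sin (x + π) ≠ 0 := by rwa [sin_add_pi, neg_ne_zero]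
  rw [Ne, Ne, pairEnergyDeriv_eq_zero_iff hx, pairEnergyDeriv_eq_zero_iff hx', cos_add_pi]
  by_contra! ⟨h, h'⟩
  linarith

theorem V_eq_sum_pairEnergy (μ θ : Fin 4 → ℝ) :
    V μ θ = -∑ i : Fin 4, ∑ j ∈ Finset.Ioi i, μ i * μ j * pairEnergy (θ i - θ j) := rfl

theorem partialV_eq_sum (μ θ : Fin 4 → ℝ)
    (hθ : ∀ i j : Fin 4, i < j → cos (θ i - θ j) ≠ 1) (k : Fin 4) :
    partialV μ θ k = -∑ i : Fin 4, ∑ j ∈ Finset.Ioi i, μ i * μ j *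
      (((Pi.single k 1 : Fin 4 → ℝ) i - (Pi.single k 1 : Fin 4 → ℝ) j) * pairEnergyDeriv (θ i - θ j)) := by
  refine HasDerivAt.deriv ?_
  simp only [V_eq_sum_pairEnergy]
  refine .neg (HasDerivAt.fun_sum fun i _ => HasDerivAt.fun_sum fun j hj => .const_mul _ ?_)
  have hupd := hasDerivAt_pi.1 (hasDerivAt_update θ k (θ k))
  have hdiff := (hupd i).fun_sub (hupd j)
  have := (hasDerivAt_pairEnergy (hθ i j (Finset.mem_Ioi.1 hj))).comp_of_eq (θ k) hdiff
    (by simp only [Function.update_eq_self])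
  simpa only [mul_comm, Function.comp_def] using this

theorem partialV_rectangle (μ : Fin 4 → ℝ) {t : ℝ} (ht : sin t ≠ 0) :
    partialV μ ![0, t, π, t + π] =
      ![μ 0 * (μ 1 * pairEnergyDeriv t + μ 3 * pairEnergyDeriv (t + π)),
        -(μ 1 * (μ 0 * pairEnergyDeriv t + μ 2 * pairEnergyDeriv (t + π))),
        μ 2 * (μ 3 * pairEnergyDeriv t + μ 1 * pairEnergyDeriv (t + π)),
        -(μ 3 * (μ 2 * pairEnergyDeriv t + μ 0 * pairEnergyDeriv (t + π)))] := by
  have hcos : cos t ≠ 1 ∧ cos t ≠ -1 := by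
    rwa [Ne, sin_eq_zero_iff_cos_eq, not_or] at ht
  have hθ : ∀ i j : Fin 4, i < j → cos (![0, t, π, t + π] i - ![0, t, π, t + π] j) ≠ 1 := by
    intro i j hij
    fin_cases i <;> fin_cases j <;>
      first
      | exact absurd hij (by decide)
      | norm_num [cos_sub, cos_add, hcos.1, hcos.2, neg_eq_iff_eq_neg]
  funext k
  rw [partialV_eq_sum μ _ hθ]
  have h0 : Finset.Ioi (0 : Fin 4) = {1, 2, 3} := by decide
  have h1 : Finset.Ioi (1 : Fin 4) = {2, 3} := by decide
  have h2 : Finset.Ioi (2 : Fin 4) = {3} := by decide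
  have h3 : Finset.Ioi (3 : Fin 4) = ∅ := by decide
  fin_cases k <;>
    simp [Fin.sum_univ_four, Pi.single_apply, h0, h1, h2, h3, pairEnergyDeriv_neg,
      pairEnergyDeriv_pi, pairEnergyDeriv_sub_pi] <;>
    ring

/-- Rectangles: if `(0, theta2, pi, theta2 + pi)` is a critical point of `V`,
then the circulations of the reflected pairs are both equal or both opposite. -/
theorem rectangle_circulations (μ1 μ2 μ3 μ4 θ2 : ℝ)
    (h1 : μ1 ≠ 0) (h2 : μ2 ≠ 0) (h3 : μ3 ≠ 0) (h4 : μ4 ≠ 0)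
    (hθ : θ2 ∈ Set.Ioo (0 : ℝ) (2 * π)) (hθπ : θ2 ≠ π)
    (hcrit : IsCriticalPt ![μ1, μ2, μ3, μ4] ![0, θ2, π, θ2 + π]) :
    (μ1 = μ3 ∧ μ2 = μ4) ∨ (μ1 = -μ3 ∧ μ2 = -μ4) := by
  have hs := sin_ne_zero_of_mem_Ioo_of_ne_pi hθ hθπ
  have e0 := hcrit 0
  have e1 := hcrit 1
  have e2 := hcrit 2
  have e3 := hcrit 3
  simp only [partialV_rectangle _ hs, Matrix.cons_val, neg_eq_zero, mul_eq_zero, h1, h2, h3, h4,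
    false_or] at e0 e1 e2 e3
  exact pairs_eq_or_eq_neg_of_swap_eqns (pairEnergyDeriv_ne_zero_or_add_pi hs) e1 e3 e0 e2
end
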